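/- arXiv:0805.4578 — 2 statements merged into one kernel-verified Lean document; each statement's English description precedes it below -/
import Mathlib

section
/- Let P be a complete cd-structure on C, and let U be an object of C. Then the cd-structure P/U on the slice category C/U induced by P (consisting of squares in C/U whose underlying squares in C are in P) is complete. -/
open CategoryTheory CategoryTheory.Limits Opposite

universe v u
variable {C : Type u} [Category.{v} C]

/-- A commutative square in `C`, with corners `B`, `Y`, `A`, `X`. -/
structure CDSquare (C : Type u) [Category.{v} C] where
  B : C
  Y : C
  A : C
  X : C
  top : B ⟶ Y
  left : B ⟶ A
  p : Y ⟶ X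
  e : A ⟶ X
  comm : top ≫ p = left ≫ e

/-- A morphism of squares. -/
structure CDSquareHom (Q' Q : CDSquare C) where
  hB : Q'.B ⟶ Q.B
  hY : Q'.Y ⟶ Q.Y
  hA : Q'.A ⟶ Q.A
  hX : Q'.X ⟶ Q.X
  commTop : Q'.top ≫ hY = hB ≫ Q.top
  commLeft : Q'.left ≫ hA = hB ≫ Q.left
  commP : Q'.p ≫ hX = hY ≫ Q.p
  commE : Q'.e ≫ hX = hA ≫ Q.e

/-- Two squares are isomorphic if there is a morphism of squares which is an isomorphism
on each corner. -/
def CDSquare.Iso (Q' Q : CDSquare C) : Prop :=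
  ∃ φ : CDSquareHom Q' Q, IsIso φ.hB ∧ IsIso φ.hY ∧ IsIso φ.hA ∧ IsIso φ.hX

/-- A cd-structure is a collection of commutative squares closed under isomorphism. -/
def IsCdStructure (P : Set (CDSquare C)) : Prop :=
  ∀ Q ∈ P, ∀ Q' : CDSquare C, CDSquare.Iso Q' Q → Q' ∈ P

/-- The sieve generated by the two morphisms `p : Y ⟶ X` and `e : A ⟶ X` of a square. -/
def CDSquare.sieve (Q : CDSquare C) : Sieve Q.X where
  arrows Z g := (∃ h : Z ⟶ Q.Y, g = h ≫ Q.p) ∨ (∃ h : Z ⟶ Q.A, g = h ≫ Q.e)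
  downward_closed := by
    rintro Z W g (⟨h, rfl⟩ | ⟨h, rfl⟩) f
    · exact Or.inl ⟨f ≫ h, (Category.assoc _ _ _).symm⟩
    · exact Or.inr ⟨f ≫ h, (Category.assoc _ _ _).symm⟩

variable [HasInitial C]

/-- The topology associated with a cd-structure: the smallest Grothendieck topology
for which the empty sieve covers the initial object and the sieve generated by the two
sides of any distinguished square is a covering sieve. -/
def cdTopology (P : Set (CDSquare C)) : GrothendieckTopology C :=
  sInf {J | (⊥ : Sieve (⊥_ C)) ∈ J (⊥_ C) ∧ ∀ Q ∈ P, Q.sieve ∈ J Q.X}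

/-- Simple coverings: the smallest class of families of morphisms containing the
isomorphisms and closed under composition with distinguished squares. -/
inductive IsSimpleCovering (P : Set (CDSquare C)) : ∀ {X : C}, Presieve X → Prop
  | of_iso {X Y : C} (f : Y ⟶ X) (hf : IsIso f) : IsSimpleCovering P (Presieve.singleton f)
  | of_square (Q : CDSquare C) (hQ : Q ∈ P) (Sy : Presieve Q.Y) (Sa : Presieve Q.A)
      (hy : IsSimpleCovering P Sy) (ha : IsSimpleCovering P Sa) :
      IsSimpleCovering P (fun Z g =>
        (∃ (h : Z ⟶ Q.Y), Sy h ∧ g = h ≫ Q.p) ∨ (∃ (h : Z ⟶ Q.A), Sa h ∧ g = h ≫ Q.e))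

/-- A cd-structure is complete if any covering sieve of an object not isomorphic to the
initial object contains a sieve generated by a simple covering. -/
def IsCompleteCd (P : Set (CDSquare C)) : Prop :=
  ∀ (X : C) (S : Sieve X), ¬ Nonempty (X ≅ ⊥_ C) → S ∈ cdTopology P X →
    ∃ T : Presieve X, IsSimpleCovering P T ∧ Sieve.generate T ≤ S

/-- Image of a commutative square under a functor. -/
@[simps]
def CDSquare.map {D : Type*} [Category D] (F : C ⥤ D) (Q : CDSquare C) : CDSquare D where
  B := F.obj Q.B
  Y := F.obj Q.Y
  A := F.obj Q.A
  X := F.obj Q.X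
  top := F.map Q.top
  left := F.map Q.left
  p := F.map Q.p
  e := F.map Q.e
  comm := by rw [← F.map_comp, ← F.map_comp, Q.comm]

/-- The cd-structure induced on the slice category `C/U`: the squares whose underlying
squares in `C` are distinguished. -/
def sliceCd (P : Set (CDSquare C)) (U : C) : Set (CDSquare (Over U)) :=
  {Q | Q.map (Over.forget U) ∈ P}

/-!
A covering sieve `S` of `X : Over U` corresponds to a covering sieve of `X.left` in the
topology of `P`, because the topology of `P/U` is contained in the topology induced on `C/U`
by that of `P`. Completeness of `P` gives a simple covering of `X.left` inside it, and a simple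
covering of an object of `C` equipped with a map to `U` lifts, square by square, to a simple
covering in `C/U` whose underlying family lies in the original one.
-/

namespace CategoryTheory.Sieve

variable {C : Type*} [Category C]

lemma overEquiv_left_iff {X : C} {Y : Over X} (S : Sieve Y) {Z : Over X} (f : Z ⟶ Y) :
    overEquiv Y S f.left ↔ S f := by
  rw [← overEquiv_symm_iff, OrderIso.symm_apply_apply]

end CategoryTheory.Sieve

section CdTopology

variable (P : Set (CDSquare C))

lemma bot_mem_cdTopology_initial : (⊥ : Sieve (⊥_ C)) ∈ cdTopology P (⊥_ C) :=
  (GrothendieckTopology.mem_sInf _ _).2 fun _ hJ => hJ.1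

lemma bot_mem_cdTopology_of_isInitial {Z : C} (hZ : IsInitial Z) :
    (⊥ : Sieve Z) ∈ cdTopology P Z := by
  simpa only [Sieve.pullback_bot] using
    (cdTopology P).pullback_stable (hZ.to (⊥_ C)) (bot_mem_cdTopology_initial P)

variable {P} in
lemma CDSquare.sieve_mem_cdTopology {Q : CDSquare C} (hQ : Q ∈ P) :
    Q.sieve ∈ cdTopology P Q.X :=
  (GrothendieckTopology.mem_sInf _ _).2 fun _ hJ => hJ.2 Q hQ

lemma cdTopology_sliceCd_le_over (U : C) :
    cdTopology (sliceCd P U) ≤ (cdTopology P).over U := by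
  refine sInf_le ⟨?_, fun Q hQ => ?_⟩
  · rw [GrothendieckTopology.mem_over_iff, Sieve.overEquiv_apply, Sieve.functorPushforward_bot]
    exact bot_mem_cdTopology_of_isInitial P (initialIsInitial.isInitialObj (Over.forget U) _)
  · rw [GrothendieckTopology.mem_over_iff]
    refine (cdTopology P).superset_covering ?_ (CDSquare.sieve_mem_cdTopology (Q := Q.map _) hQ)
    rintro Z g (⟨h, rfl⟩ | ⟨h, rfl⟩)
    · exact (Sieve.overEquiv_left_iff _ ((Over.homMk h : Over.mk (h ≫ Q.Y.hom) ⟶ _) ≫ Q.p)).2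
        (Or.inl ⟨_, rfl⟩)
    · exact (Sieve.overEquiv_left_iff _ ((Over.homMk h : Over.mk (h ≫ Q.A.hom) ⟶ _) ≫ Q.e)).2
        (Or.inr ⟨_, rfl⟩)

end CdTopology

section Lifting

variable {C : Type*} [Category C] {P : Set (CDSquare C)} {U : C}

@[simps]
def CDSquare.overMk (Q : CDSquare C) (z : Q.X ⟶ U) : CDSquare (Over U) where
  B := Over.mk (Q.top ≫ Q.p ≫ z)
  Y := Over.mk (Q.p ≫ z)
  A := Over.mk (Q.e ≫ z)
  X := Over.mk z
  top := Over.homMk Q.top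
  left := Over.homMk Q.left (by simp only [Over.mk_hom, reassoc_of% Q.comm])
  p := Over.homMk Q.p
  e := Over.homMk Q.e
  comm := by ext; exact Q.comm

lemma CDSquare.overMk_mem_sliceCd {Q : CDSquare C} (hQ : Q ∈ P) (z : Q.X ⟶ U) :
    Q.overMk z ∈ sliceCd P U :=
  hQ

lemma IsSimpleCovering.exists_over {Z : C} {T : Presieve Z} (hT : IsSimpleCovering P T)
    (z : Z ⟶ U) : ∃ T' : Presieve (Over.mk z), IsSimpleCovering (sliceCd P U) T' ∧
      ∀ ⦃W : Over U⦄ (g : W ⟶ Over.mk z), T' g → T g.left := by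
  induction hT generalizing U with
  | of_iso f hf =>
    refine ⟨Presieve.singleton (Over.homMk f : Over.mk (f ≫ z) ⟶ Over.mk z), .of_iso _ ?_, ?_⟩
    · have : IsIso ((Over.forget U).map (Over.homMk f : Over.mk (f ≫ z) ⟶ Over.mk z)) := hf
      exact isIso_of_reflects_iso _ (Over.forget U)
    · rintro W g ⟨⟩
      exact Presieve.singleton.mk
  | of_square Q hQ Sy Sa _ _ ihy iha =>
    obtain ⟨Sy', hSy', hSy'Sy⟩ := ihy (Q.p ≫ z)
    obtain ⟨Sa', hSa', hSa'Sa⟩ := iha (Q.e ≫ z)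
    refine ⟨_, .of_square (Q.overMk z) (Q.overMk_mem_sliceCd hQ z) Sy' Sa' hSy' hSa', ?_⟩
    rintro W g (⟨h, hh, rfl⟩ | ⟨h, hh, rfl⟩)
    · exact Or.inl ⟨h.left, hSy'Sy h hh, rfl⟩
    · exact Or.inr ⟨h.left, hSa'Sa h hh, rfl⟩

end Lifting

theorem statement3_general (P : Set (CDSquare C))
    (hcomp : IsCompleteCd P) (U : C) :
    IsCompleteCd (sliceCd P U) := by
  intro X S hX hS
  have hX_left : ¬ Nonempty (X.left ≅ ⊥_ C) := fun ⟨e⟩ => hX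
    ⟨((initialIsInitial.ofIso e.symm).isInitialOfObj (Over.forget U) X).uniqueUpToIso
      initialIsInitial⟩
  obtain ⟨T, hT, hTS⟩ := hcomp X.left _ hX_left (cdTopology_sliceCd_le_over P U X hS)
  obtain ⟨T', hT', hT'T⟩ := hT.exists_over X.hom
  refine ⟨T', hT', (Sieve.generate_le_iff _ _).2 fun W g hg => ?_⟩
  exact (Sieve.overEquiv_left_iff S g).1 (hTS _ (Sieve.le_generate T _ _ (hT'T g hg)))

theorem statement3 (P : Set (CDSquare C)) (hP : IsCdStructure P)
    (hcomp : IsCompleteCd P) (U : C) :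
    IsCompleteCd (sliceCd P U) :=
  statement3_general P hcomp U
end

section
/- Let C be a chunky category. Then a presheaf of sets on C is a radditive functor (i.e., F(∅) is a point and F(X ⊔ Y) → F(X) × F(Y) is a bijection for all X, Y) if and only if it is a sheaf in the topology t_add associated to the additive cd-structure P_add. -/
open CategoryTheory CategoryTheory.Limits Opposite

universe v u
variable {C : Type u} [Category.{v} C]

variable [HasInitial C]

variable {E : Type u} [SmallCategory E] [HasInitial E] [HasFiniteCoproducts E]

/-- A small category with initial object and finite coproducts is chunky. -/
def IsChunky (E : Type u) [SmallCategory E] [HasInitial E] [HasFiniteCoproducts E] : Prop :=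
  (∀ (Z : E) (f : Z ⟶ ⊥_ E), IsIso f) ∧
  (∀ X Y : E, IsPullback (initial.to X) (initial.to Y)
    (coprod.inl : X ⟶ X ⨿ Y) (coprod.inr : Y ⟶ X ⨿ Y)) ∧
  (∀ (X Y Z : E) (f : Z ⟶ X ⨿ Y),
    ∃ (Zx Zy : E) (px : Zx ⟶ Z) (qx : Zx ⟶ X) (py : Zy ⟶ Z) (qy : Zy ⟶ Y),
      IsPullback px qx f coprod.inl ∧ IsPullback py qy f coprod.inr ∧
      Nonempty (IsColimit (BinaryCofan.mk px py)))

/-- The canonical coproduct square `∅, X, Y, X ⊔ Y`. -/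
noncomputable def coprodSquare (X Y : E) : CDSquare E where
  B := ⊥_ E
  Y := X
  A := Y
  X := X ⨿ Y
  top := initial.to X
  left := initial.to Y
  p := coprod.inl
  e := coprod.inr
  comm := Subsingleton.elim _ _

/-- The additive cd-structure: all squares isomorphic to a coproduct square. -/
def addCd (E : Type u) [SmallCategory E] [HasInitial E] [HasFiniteCoproducts E] :
    Set (CDSquare E) :=
  {Q | ∃ X Y : E, CDSquare.Iso Q (coprodSquare X Y)}

/-- A presheaf of sets is radditive if `F(∅)` is a point and
`F(X ⊔ Y) → F(X) × F(Y)` is a bijection for all `X`, `Y`. -/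
def IsRadditive (F : Eᵒᵖ ⥤ Type u) : Prop :=
  (Nonempty (F.obj (op (⊥_ E))) ∧ Subsingleton (F.obj (op (⊥_ E)))) ∧
  ∀ X Y : E, Function.Bijective (fun a : F.obj (op (X ⨿ Y)) =>
    (F.map (coprod.inl : X ⟶ X ⨿ Y).op a, F.map (coprod.inr : Y ⟶ X ⨿ Y).op a))

/-!
A presheaf is a sheaf for the topology generated by some sieves iff it is a sheaf for all their
pullbacks, because those sieves form the finest topology for which it is a sheaf. For `t_add`
the generators are the empty sieve on `∅`, whose pullbacks demand that `F` be a point on every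
object mapping to `∅`, and the coproduct sieves. In a chunky category the pullback of a
coproduct sieve along `Z ⟶ X ⨿ Y` is again a coproduct sieve `{Zx ⟶ Z, Zy ⟶ Z}` with
`Z = Zx ⨿ Zy`, and its two arrows are monic and disjoint; so its compatible families are
arbitrary pairs, and the sheaf condition says exactly that `F Z → F Zx × F Zy` is bijective.
-/

section General

variable {D : Type*} [Category* D]

lemma CategoryTheory.Sieve.mem_ofTwoArrows_iff {U V X W : D} (i : U ⟶ X) (j : V ⟶ X) (g : W ⟶ X) :
    Sieve.ofTwoArrows i j g ↔ (∃ h : W ⟶ U, g = h ≫ i) ∨ (∃ h : W ⟶ V, g = h ≫ j) := by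
  rw [Sieve.mem_ofArrows_iff]
  constructor
  · rintro ⟨⟨_ | _⟩, h, rfl⟩
    exacts [Or.inl ⟨h, rfl⟩, Or.inr ⟨h, rfl⟩]
  · rintro (⟨h, rfl⟩ | ⟨h, rfl⟩)
    exacts [⟨.left, h, rfl⟩, ⟨.right, h, rfl⟩]

lemma CDSquare.sieve_eq_ofTwoArrows (Q : CDSquare D) : Q.sieve = Sieve.ofTwoArrows Q.p Q.e := by
  ext W g
  rw [Sieve.mem_ofTwoArrows_iff]
  rfl

lemma CDSquare.Iso.refl (Q : CDSquare D) : Q.Iso Q :=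
  ⟨⟨𝟙 _, 𝟙 _, 𝟙 _, 𝟙 _, by simp, by simp, by simp, by simp⟩,
    inferInstance, inferInstance, inferInstance, inferInstance⟩

lemma CDSquare.sieve_eq_pullback_of_hom {Q' Q : CDSquare D} (φ : CDSquareHom Q' Q)
    [IsIso φ.hY] [IsIso φ.hA] [IsIso φ.hX] : Q'.sieve = Q.sieve.pullback φ.hX := by
  ext W g
  constructor
  · rintro (⟨h, rfl⟩ | ⟨h, rfl⟩)
    · exact Or.inl ⟨h ≫ φ.hY, by simp [φ.commP]⟩
    · exact Or.inr ⟨h ≫ φ.hA, by simp [φ.commE]⟩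
  · rintro (⟨h, hh⟩ | ⟨h, hh⟩)
    · exact Or.inl ⟨h ≫ inv φ.hY, by rw [← cancel_mono φ.hX]; simp [φ.commP, hh]⟩
    · exact Or.inr ⟨h ≫ inv φ.hA, by rw [← cancel_mono φ.hX]; simp [φ.commE, hh]⟩

lemma CategoryTheory.Presieve.isSheafFor_bot_iff (F : Dᵒᵖ ⥤ Type*) (X : D) :
    Presieve.IsSheafFor F (⊥ : Sieve X).arrows ↔
      Nonempty (F.obj (op X)) ∧ Subsingleton (F.obj (op X)) := by
  constructor
  · intro h
    obtain ⟨t, -, ht⟩ := h (fun _ _ hg => hg.elim) (fun _ _ _ _ _ _ _ hg => hg.elim)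
    exact ⟨⟨t⟩, ⟨fun a b =>
      (ht a fun _ _ hg => hg.elim).trans (ht b fun _ _ hg => hg.elim).symm⟩⟩
  · rintro ⟨⟨t⟩, _⟩ x -
    exact ⟨t, fun _ _ hg => hg.elim, fun _ _ => Subsingleton.elim _ _⟩

/-- Every pair of sections is a compatible family: the arrows are monic, and objects over both
of them carry at most one section. -/
lemma CategoryTheory.Presieve.isSheafFor_ofTwoArrows_iff (F : Dᵒᵖ ⥤ Type*) {Z Zx Zy : D} (px : Zx ⟶ Z) (py : Zy ⟶ Z)
    [Mono px] [Mono py]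
    (hdisj : ∀ ⦃W⦄ (gx : W ⟶ Zx) (gy : W ⟶ Zy), gx ≫ px = gy ≫ py →
      Subsingleton (F.obj (op W))) :
    Presieve.IsSheafFor F (Sieve.ofTwoArrows px py).arrows ↔
      Function.Bijective (fun a : F.obj (op Z) => (F.map px.op a, F.map py.op a)) := by
  rw [← Presieve.isSheafFor_iff_generate, Presieve.isSheafFor_arrows_iff,
    Function.bijective_iff_existsUnique]
  refine ⟨fun h b => ?_, fun h x _ => ?_⟩
  · have hcompat : Presieve.Arrows.Compatible F (fun k ↦ WalkingPair.casesOn k px py)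
        (fun k ↦ WalkingPair.casesOn (motive := fun k ↦ F.obj (op (pairFunction Zx Zy k)))
          k b.1 b.2) := by
      rintro (_ | _) (_ | _) W gi gj hg
      · obtain rfl := (cancel_mono px).1 hg; rfl
      · have := hdisj gi gj hg; exact Subsingleton.elim _ _
      · have := hdisj gj gi hg.symm; exact Subsingleton.elim _ _
      · obtain rfl := (cancel_mono py).1 hg; rfl
    obtain ⟨t, ht, hu⟩ := h _ hcompat
    refine ⟨t, Prod.ext (ht .left) (ht .right), fun t' ht' => hu t' ?_⟩
    rintro (_ | _)
    exacts [congrArg (·.1) ht', congrArg (·.2) ht']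
  · obtain ⟨t, ht, hu⟩ := h (x .left, x .right)
    refine ⟨t, ?_, fun t' ht' => hu t' (Prod.ext (ht' .left) (ht' .right))⟩
    rintro (_ | _)
    exacts [congrArg (·.1) ht, congrArg (·.2) ht]

lemma bijective_of_isColimit_binaryCofan (F : Dᵒᵖ ⥤ Type*) {Z Zx Zy : D} {px : Zx ⟶ Z}
    {py : Zy ⟶ Z} (hc : IsColimit (BinaryCofan.mk px py)) [HasBinaryCoproduct Zx Zy]
    (h : Function.Bijective (fun a : F.obj (op (Zx ⨿ Zy)) =>
      (F.map (coprod.inl : Zx ⟶ Zx ⨿ Zy).op a, F.map (coprod.inr : Zy ⟶ Zx ⨿ Zy).op a))) :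
    Function.Bijective (fun a : F.obj (op Z) => (F.map px.op a, F.map py.op a)) := by
  let e : Z ≅ Zx ⨿ Zy := hc.coconePointUniqueUpToIso (colimit.isColimit _)
  have hx : coprod.inl ≫ e.inv = px :=
    hc.comp_coconePointUniqueUpToIso_inv (colimit.isColimit _) ⟨.left⟩
  have hy : coprod.inr ≫ e.inv = py :=
    hc.comp_coconePointUniqueUpToIso_inv (colimit.isColimit _) ⟨.right⟩
  convert h.comp (F.mapIso e.op).toEquiv.symm.bijective using 1
  funext a
  simp [← hx, ← hy]

lemma CategoryTheory.Presieve.isSheaf_iff_le_finestTopologySingle (J : GrothendieckTopology D)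
    (F : Dᵒᵖ ⥤ Type*) : Presieve.IsSheaf J F ↔ J ≤ Sheaf.finestTopologySingle F :=
  ⟨fun h _ _ hS _ f => h _ (J.pullback_stable f hS),
    fun h => Presieve.isSheaf_of_le F h fun X _ hS => by simpa using hS X (𝟙 X)⟩

end General

lemma cdTopology_le_iff (P : Set (CDSquare C)) (J : GrothendieckTopology C) :
    cdTopology P ≤ J ↔ (⊥ : Sieve (⊥_ C)) ∈ J (⊥_ C) ∧ ∀ Q ∈ P, Q.sieve ∈ J Q.X := by
  refine ⟨fun h => ⟨h _ ?_, fun Q hQ => h _ ?_⟩, fun hJ => sInf_le hJ⟩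
  · exact (GrothendieckTopology.mem_sInf _ _).2 fun _ hJ => hJ.1
  · exact (GrothendieckTopology.mem_sInf _ _).2 fun _ hJ => hJ.2 Q hQ

lemma isSheaf_cdTopology_iff (P : Set (CDSquare C)) (F : Cᵒᵖ ⥤ Type*) :
    Presieve.IsSheaf (cdTopology P) F ↔
      (∀ Z, (Z ⟶ ⊥_ C) → Presieve.IsSheafFor F (⊥ : Sieve Z).arrows) ∧
        ∀ Q ∈ P, ∀ Z (f : Z ⟶ Q.X), Presieve.IsSheafFor F (Q.sieve.pullback f).arrows := by
  rw [Presieve.isSheaf_iff_le_finestTopologySingle, cdTopology_le_iff]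
  refine and_congr (forall₂_congr fun Z _ => ?_) Iff.rfl
  rw [Sieve.pullback_bot]

namespace IsChunky

lemma hasStrictInitialObjects (hE : IsChunky E) : HasStrictInitialObjects E :=
  hasStrictInitialObjects_of_initial_is_strict hE.1

noncomputable def isInitialOfCompInlEqCompInr (hE : IsChunky E) {W X Y : E} (gx : W ⟶ X)
    (gy : W ⟶ Y) (w : gx ≫ coprod.inl = gy ≫ coprod.inr) : IsInitial W :=
  haveI := hE.hasStrictInitialObjects
  .ofStrict ((hE.2.1 X Y).lift gx gy w) initialIsInitial

noncomputable def isInitialOfIsColimit (hE : IsChunky E) {W Z Zx Zy : E} {px : Zx ⟶ Z}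
    {py : Zy ⟶ Z} (hc : IsColimit (BinaryCofan.mk px py)) (gx : W ⟶ Zx) (gy : W ⟶ Zy)
    (w : gx ≫ px = gy ≫ py) : IsInitial W :=
  hE.isInitialOfCompInlEqCompInr gx gy <| by
    let e : Z ≅ Zx ⨿ Zy := hc.coconePointUniqueUpToIso (colimit.isColimit _)
    have hx : px ≫ e.hom = coprod.inl :=
      hc.comp_coconePointUniqueUpToIso_hom (colimit.isColimit _) ⟨.left⟩
    have hy : py ≫ e.hom = coprod.inr :=
      hc.comp_coconePointUniqueUpToIso_hom (colimit.isColimit _) ⟨.right⟩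
    rw [← hx, ← hy, reassoc_of% w]

lemma mono_inl (hE : IsChunky E) (X Y : E) : Mono (coprod.inl : X ⟶ X ⨿ Y) := by
  refine ⟨fun {Z} h h' w => ?_⟩
  -- Pulling back along `inl` splits `Z` as `Zx ⨿ Zy` with `Zy` initial, so `px` is invertible
  -- and any `k` with `k ≫ inl = h ≫ inl` is the second component `inv px ≫ qx` of its inverse.
  obtain ⟨Zx, Zy, px, qx, py, qy, hx, hy, hc⟩ := hE.2.2 X Y Z (h ≫ coprod.inl)
  have : IsIso px := (BinaryCofan.isColimit_iff_isIso_inl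
    (hE.isInitialOfCompInlEqCompInr (py ≫ h) qy (by simpa using hy.w)) _).1 hc
  have key (k : Z ⟶ X) (hk : k ≫ (coprod.inl : X ⟶ X ⨿ Y) = h ≫ coprod.inl) :
      k = inv px ≫ qx := by
    have hs : hx.lift (𝟙 Z) k (by simp [hk]) = inv px := by
      rw [← cancel_mono px, IsIso.inv_hom_id, hx.lift_fst]
    rw [← hs, hx.lift_snd]
  rw [key h rfl, key h' w.symm]

lemma monoCoprod (hE : IsChunky E) : MonoCoprod E :=
  MonoCoprod.mk' fun X Y => ⟨_, coprodIsCoprod X Y, hE.mono_inl X Y⟩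

lemma exists_pullback_coprodSquare_sieve_eq_ofTwoArrows (hE : IsChunky E) {X Y Z : E}
    (f : Z ⟶ X ⨿ Y) :
    ∃ (Zx Zy : E) (px : Zx ⟶ Z) (py : Zy ⟶ Z), Nonempty (IsColimit (BinaryCofan.mk px py)) ∧
      (coprodSquare X Y).sieve.pullback f = Sieve.ofTwoArrows px py := by
  obtain ⟨Zx, Zy, px, qx, py, qy, hx, hy, hc⟩ := hE.2.2 X Y Z f
  refine ⟨Zx, Zy, px, py, hc, ?_⟩
  ext W g
  rw [Sieve.mem_ofTwoArrows_iff]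
  constructor
  · rintro (⟨k, hk⟩ | ⟨k, hk⟩)
    · exact Or.inl ⟨hx.lift g k hk, (hx.lift_fst ..).symm⟩
    · exact Or.inr ⟨hy.lift g k hk, (hy.lift_fst ..).symm⟩
  · rintro (⟨k, rfl⟩ | ⟨k, rfl⟩)
    · exact Or.inl ⟨k ≫ qx, by simp [hx.w, coprodSquare]⟩
    · exact Or.inr ⟨k ≫ qy, by simp [hy.w, coprodSquare]⟩

lemma isSheafFor_ofTwoArrows_iff (hE : IsChunky E) (F : Eᵒᵖ ⥤ Type*)
    [Subsingleton (F.obj (op (⊥_ E)))] {Z Zx Zy : E} {px : Zx ⟶ Z} {py : Zy ⟶ Z}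
    (hc : IsColimit (BinaryCofan.mk px py)) :
    Presieve.IsSheafFor F (Sieve.ofTwoArrows px py).arrows ↔
      Function.Bijective (fun a : F.obj (op Z) => (F.map px.op a, F.map py.op a)) := by
  have := hE.monoCoprod
  have : Mono px := MonoCoprod.binaryCofan_inl _ hc
  have : Mono py := MonoCoprod.binaryCofan_inr _ hc
  refine Presieve.isSheafFor_ofTwoArrows_iff F px py fun W gx gy w => ?_
  let e := F.mapIso ((hE.isInitialOfIsColimit hc gx gy w).uniqueUpToIso initialIsInitial).op
  exact e.toEquiv.subsingleton_congr.1 ‹_›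

lemma forall_isSheafFor_bot_iff (hE : IsChunky E) (F : Eᵒᵖ ⥤ Type*) :
    (∀ Z, (Z ⟶ ⊥_ E) → Presieve.IsSheafFor F (⊥ : Sieve Z).arrows) ↔
      Nonempty (F.obj (op (⊥_ E))) ∧ Subsingleton (F.obj (op (⊥_ E))) := by
  simp_rw [Presieve.isSheafFor_bot_iff]
  refine ⟨fun h => h _ (𝟙 _), fun h Z f => ?_⟩
  have := hE.1 Z f
  let e := (F.mapIso (asIso f).op).toEquiv
  exact ⟨e.nonempty_congr.1 h.1, e.subsingleton_congr.1 h.2⟩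

lemma forall_isSheafFor_addCd_iff (hE : IsChunky E) (F : Eᵒᵖ ⥤ Type*)
    [Subsingleton (F.obj (op (⊥_ E)))] :
    (∀ Q ∈ addCd E, ∀ Z (f : Z ⟶ Q.X), Presieve.IsSheafFor F (Q.sieve.pullback f).arrows) ↔
      ∀ X Y : E, Function.Bijective (fun a : F.obj (op (X ⨿ Y)) =>
        (F.map (coprod.inl : X ⟶ X ⨿ Y).op a, F.map (coprod.inr : Y ⟶ X ⨿ Y).op a)) := by
  refine ⟨fun h X Y => ?_, fun h Q hQ Z f => ?_⟩
  · have := h _ ⟨X, Y, .refl _⟩ _ (𝟙 _)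
    rw [Sieve.pullback_id, CDSquare.sieve_eq_ofTwoArrows] at this
    exact (hE.isSheafFor_ofTwoArrows_iff F (coprodIsCoprod X Y)).1 this
  · obtain ⟨X, Y, φ, -, _, _, _⟩ := hQ
    obtain ⟨Zx, Zy, px, py, ⟨hc⟩, hpb⟩ :=
      hE.exists_pullback_coprodSquare_sieve_eq_ofTwoArrows (f ≫ φ.hX)
    have hQf : Q.sieve.pullback f = Sieve.ofTwoArrows px py := by
      rw [CDSquare.sieve_eq_pullback_of_hom φ, ← Sieve.pullback_comp]
      exact hpb
    rw [hQf, hE.isSheafFor_ofTwoArrows_iff F hc]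
    exact bijective_of_isColimit_binaryCofan F hc (h Zx Zy)

end IsChunky

theorem statement18 (hE : IsChunky E) (F : Eᵒᵖ ⥤ Type u) :
    IsRadditive F ↔ Presheaf.IsSheaf (cdTopology (addCd E)) F := by
  rw [isSheaf_iff_isSheaf_of_type, isSheaf_cdTopology_iff, hE.forall_isSheafFor_bot_iff,
    IsRadditive]
  exact and_congr_right fun hpt => have := hpt.2; (hE.forall_isSheafFor_addCd_iff F).symm
end
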